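/- Let q be a prime power and let t, m be positive integers with t dividing m and t < m. Then the narrow-sense primitive BCH code C_{(q, q^m−1, q^t+1, 1)} has minimum distance exactly d = q^t + 1. -/

import Mathlib

open Polynomial

/-- The narrow-sense primitive BCH code `C_(q,n,δ,1)` of length `n` and designed
distance `δ` with respect to the primitive element `β` of `E`: the `F`-linear
subspace of all `c` with `∑ i, c_i β^{i·j} = 0` for all `1 ≤ j ≤ δ - 1`. -/
def bchCode (F E : Type) [Field F] [Field E] [Algebra F E] (n δ : ℕ) (β : E) :
    Submodule F (Fin n → F) where
  carrier := {c | ∀ j : ℕ, 1 ≤ j → j ≤ δ - 1 →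
    ∑ i : Fin n, algebraMap F E (c i) * β ^ ((i : ℕ) * j) = 0}
  add_mem' := by
    intro a b ha hb j h1 h2
    simp only [Pi.add_apply, map_add, add_mul]
    rw [Finset.sum_add_distrib, ha j h1 h2, hb j h1 h2, add_zero]
  zero_mem' := by
    intro j h1 h2
    simp
  smul_mem' := by
    intro r a ha j h1 h2
    simp only [Pi.smul_apply, smul_eq_mul, map_mul, mul_assoc]
    rw [← Finset.mul_sum, ha j h1 h2, mul_zero]

/-- A (nonzero, linear) code `Γ ⊆ F^n` has minimum distance `d`:
there is a nonzero codeword of Hamming weight `d`, and every nonzero codeword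
has Hamming weight at least `d`. -/
def hasMinDist {F : Type} [Field F] [DecidableEq F] {n : ℕ}
    (Γ : Submodule F (Fin n → F)) (d : ℕ) : Prop :=
  (∃ c ∈ Γ, c ≠ 0 ∧ hammingNorm c = d) ∧ ∀ c ∈ Γ, c ≠ 0 → d ≤ hammingNorm c

/-! The lower bound is the BCH bound: restricted to the support of a nonzero codeword `c`, the
equations `∑ cᵢ βⁱʲ = 0` for `j = 1, …, wt c` form a nonsingular Vandermonde system.

For the upper bound let `K ⊆ E` be the subfield with `Q = q ^ t` elements and `w ∉ K`. The
`Q + 1` elements `(a + w) ^ (Q - 1) = (a + w ^ Q) / (a + w)`, `a ∈ K`, together with `1` are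
distinct and nonzero. For `1 ≤ j ≤ Q` the Frobenius identity gives
`(a + w) ^ ((Q - 1) j) = (a + w ^ Q) ^ (j - 1) (a + w) ^ (Q - j)`, a monic polynomial of degree
`Q - 1` in `a`, whose sum over `a ∈ K` is `-1`. So the `j`-th power sums of these `Q + 1`
elements vanish, and their indicator vector is a codeword of weight `Q + 1`. -/

open Finset

theorem eq_zero_of_forall_sum_mul_pow_eq_zero {R ι : Type*} [CommRing R] [IsDomain R]
    {s : Finset ι} {x v : ι → R} (hx : Set.InjOn x s)
    (h : ∀ j < #s, ∑ i ∈ s, v i * x i ^ j = 0) : ∀ i ∈ s, v i = 0 := by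
  let e := s.equivFin
  have hzero : (fun k => v (e.symm k)) = 0 := by
    refine Matrix.eq_zero_of_forall_pow_sum_mul_pow_eq_zero (f := fun k => x (e.symm k))
      (fun k l hkl => e.symm.injective (Subtype.ext (hx (e.symm k).2 (e.symm l).2 hkl))) fun j => ?_
    rw [e.symm.sum_comp (fun i => v i * x i ^ (j : ℕ)),
      sum_coe_sort s (fun i => v i * x i ^ (j : ℕ))]
    exact h j j.isLt
  intro i hi
  simpa using congrFun hzero (e ⟨i, hi⟩)

theorem injective_pow_of_orderOf_eq {M : Type*} [Monoid M] {x : M} {n : ℕ} (hx : orderOf x = n) :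
    Function.Injective fun i : Fin n => x ^ (i : ℕ) := fun i j hij =>
  Fin.ext (pow_injOn_Iio_orderOf (by simp [hx]) (by simp [hx]) hij)

namespace FiniteField

theorem exists_pow_ne_self {E : Type*} [Field E] [Fintype E] {n : ℕ} (hn : 1 < n)
    (hnE : n < Fintype.card E) : ∃ w : E, w ^ n ≠ w := by
  classical
  by_contra! hall
  have hne : (X ^ n - X : E[X]) ≠ 0 := X_pow_card_sub_X_ne_zero E hn
  have hsub : (univ : Finset E) ⊆ (X ^ n - X : E[X]).roots.toFinset := by
    intro w _
    simp [hne, hall w]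
  have := ((card_le_card hsub).trans (Multiset.toFinset_card_le _)).trans (card_roots' _)
  rw [card_univ, X_pow_card_sub_X_natDegree_eq E hn] at this
  omega

theorem nonempty_ringHom_galoisField {E : Type*} [Field E] [Fintype E] {p N k : ℕ}
    [hp : Fact p.Prime] (hE : Fintype.card E = p ^ N) (hk : k ≠ 0) (hkN : k ∣ N) :
    Nonempty (GaloisField p k →+* E) := by
  obtain ⟨r, hchar, n, hr, hcard⟩ := card' E
  have hrp : r = p := by
    have : r ∣ p ^ N := hE ▸ hcard ▸ dvd_pow_self r n.ne_zero
    exact (Nat.prime_dvd_prime_iff_eq hr hp.out).mp (hr.dvd_of_dvd_pow this)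
  subst hrp
  let := ZMod.algebra E r
  have hfin : Module.finrank (ZMod r) E = N :=
    Nat.pow_right_injective hp.out.two_le ((pow_finrank_eq_card r E).trans hE)
  obtain ⟨φ⟩ := nonempty_algHom_of_finrank_dvd (F := ZMod r) (K := GaloisField r k) (L := E)
    (by rwa [GaloisField.finrank r hk, hfin])
  exact ⟨φ.toRingHom⟩

theorem orderOf_eq_card_sub_one_of_forall_eq_pow {E : Type*} [Field E] [Fintype E] {β : E}
    (hE : 2 < Fintype.card E) (hβ : ∀ x : E, x ≠ 0 → ∃ k : ℕ, x = β ^ k) :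
    orderOf β = Fintype.card E - 1 := by
  classical
  have hβ0 : β ≠ 0 := by
    rintro rfl
    have hsub : (univ : Finset E) ⊆ {0, 1} := fun x _ => by
      obtain rfl | hx := eq_or_ne x 0
      · simp
      obtain ⟨k, rfl⟩ := hβ x hx
      rcases k with _ | k <;> simp
    have := (card_le_card hsub).trans card_le_two
    rw [card_univ] at this
    omega
  let u := Units.mk0 β hβ0
  have hgen : ∀ x : Eˣ, x ∈ Subgroup.zpowers u := fun x => by
    obtain ⟨k, hk⟩ := hβ x x.ne_zero
    exact ⟨k, Units.ext (by simp [u, hk])⟩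
  rw [← Units.val_mk0 hβ0, orderOf_units, orderOf_eq_card_of_forall_mem_zpowers hgen,
    Nat.card_eq_fintype_card, Fintype.card_units]

variable {K : Type*} [Field K] [Fintype K]

theorem sum_pow_card_sub_one : ∑ a : K, a ^ (Fintype.card K - 1) = -1 := by
  classical
  have hQ : 1 < Fintype.card K := Fintype.one_lt_card
  rw [← sum_erase_add _ _ (mem_univ 0), zero_pow (by omega), add_zero,
    sum_congr rfl fun a ha => pow_card_sub_one_eq_one a (ne_of_mem_erase ha),
    sum_const, card_erase_of_mem (mem_univ 0), card_univ,
    nsmul_eq_mul, mul_one, Nat.cast_sub hQ.le, cast_card_eq_zero, Nat.cast_one, zero_sub]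

variable {E : Type*} [Field E] [Algebra K E]

theorem sum_eval_algebraMap {f : E[X]} (hf : f.natDegree < Fintype.card K) :
    ∑ a : K, f.eval (algebraMap K E a) = -f.coeff (Fintype.card K - 1) := by
  have hpow : ∀ k < Fintype.card K, ∑ a : K, algebraMap K E a ^ k =
      if k = Fintype.card K - 1 then -1 else 0 := by
    intro k hk
    simp_rw [← map_pow, ← map_sum]
    split_ifs with h
    · rw [h, sum_pow_card_sub_one, map_neg, map_one]
    · rw [sum_pow_lt_card_sub_one (K := K) k (by omega), map_zero]
  simp_rw [eval_eq_sum_range' hf]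
  rw [sum_comm]
  simp_rw [← mul_sum]
  rw [sum_congr rfl fun k hk => by rw [hpow k (mem_range.mp hk)]]
  simp [Fintype.card_pos]

theorem algebraMap_add_pow_card (a : K) (w : E) :
    (algebraMap K E a + w) ^ Fintype.card K = algebraMap K E a + w ^ Fintype.card K := by
  have h := map_add (frobeniusAlgHom K E) (algebraMap K E a) w
  rwa [AlgHom.commutes, frobeniusAlgHom_apply, frobeniusAlgHom_apply] at h

variable {w : E}

theorem algebraMap_add_pow_card_sub_one_mul (a : K) :
    (algebraMap K E a + w) ^ (Fintype.card K - 1) * (algebraMap K E a + w) =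
      algebraMap K E a + w ^ Fintype.card K := by
  rw [← pow_succ, Nat.sub_add_cancel Fintype.card_pos, algebraMap_add_pow_card]

theorem algebraMap_add_ne_zero (hw : w ^ Fintype.card K ≠ w) (a : K) :
    algebraMap K E a + w ≠ 0 := by
  intro h
  have h' := algebraMap_add_pow_card a w
  rw [h, zero_pow Fintype.card_pos.ne'] at h'
  exact hw (by linear_combination -h' - h)

theorem injective_algebraMap_add_pow_card_sub_one (hw : w ^ Fintype.card K ≠ w) :
    Function.Injective fun a : K => (algebraMap K E a + w) ^ (Fintype.card K - 1) := by
  intro a b hab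
  have h := congrArg (· * ((algebraMap K E a + w) * (algebraMap K E b + w))) hab
  simp only at h
  have h' : (algebraMap K E a - algebraMap K E b) * (w ^ Fintype.card K - w) = 0 := by
    linear_combination (algebraMap K E b + w) * algebraMap_add_pow_card_sub_one_mul (w := w) a -
      (algebraMap K E a + w) * algebraMap_add_pow_card_sub_one_mul (w := w) b - h
  rcases mul_eq_zero.mp h' with h' | h'
  · exact (algebraMap K E).injective (sub_eq_zero.mp h')
  · exact absurd (sub_eq_zero.mp h') hw

theorem algebraMap_add_pow_card_sub_one_ne_one (hw : w ^ Fintype.card K ≠ w) (a : K) :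
    (algebraMap K E a + w) ^ (Fintype.card K - 1) ≠ 1 := by
  intro h
  have h' := algebraMap_add_pow_card_sub_one_mul (w := w) a
  rw [h, one_mul] at h'
  exact hw (by linear_combination -h')

theorem sum_algebraMap_add_pow_card_sub_one_pow {j : ℕ} (hj : 1 ≤ j)
    (hjQ : j ≤ Fintype.card K) :
    ∑ a : K, ((algebraMap K E a + w) ^ (Fintype.card K - 1)) ^ j = -1 := by
  set Q := Fintype.card K
  have hQ : 1 ≤ Q := Fintype.card_pos
  set f : E[X] := (X + C (w ^ Q)) ^ (j - 1) * (X + C w) ^ (Q - j)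
  have hf : f.Monic := ((monic_X_add_C _).pow _).mul ((monic_X_add_C _).pow _)
  have hfdeg : f.natDegree = Q - 1 := by
    rw [((monic_X_add_C _).pow _).natDegree_mul ((monic_X_add_C _).pow _), natDegree_pow,
      natDegree_pow, natDegree_X_add_C, natDegree_X_add_C]
    omega
  have heval : ∀ a : K, ((algebraMap K E a + w) ^ (Q - 1)) ^ j = f.eval (algebraMap K E a) := by
    intro a
    rw [← pow_mul, show (Q - 1) * j = Q * (j - 1) + (Q - j) by
      zify [hj, hjQ, hQ]; ring, pow_add, pow_mul, algebraMap_add_pow_card]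
    simp only [f, eval_mul, eval_pow, eval_add, eval_X, eval_C]
    rfl
  simp_rw [heval]
  rw [sum_eval_algebraMap (by rw [hfdeg]; exact Nat.sub_lt Fintype.card_pos one_pos), ← hfdeg,
    coeff_natDegree, hf.leadingCoeff]

variable (K w) in
/-- The image of the projective line over `K` under `a ↦ (a + w ^ #K) / (a + w)`, with
`∞ ↦ 1`; for `a ∈ K` the image is `(a + w) ^ (#K - 1)`. -/
def projLineImage [DecidableEq E] : Finset E :=
  insert 1 (univ.image fun a : K => (algebraMap K E a + w) ^ (Fintype.card K - 1))

variable [DecidableEq E]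

theorem one_notMem_image_algebraMap_add_pow_card_sub_one (hw : w ^ Fintype.card K ≠ w) :
    1 ∉ univ.image fun a : K => (algebraMap K E a + w) ^ (Fintype.card K - 1) := by
  simpa using algebraMap_add_pow_card_sub_one_ne_one hw

theorem card_projLineImage (hw : w ^ Fintype.card K ≠ w) :
    #(projLineImage K w) = Fintype.card K + 1 := by
  rw [projLineImage, card_insert_of_notMem (one_notMem_image_algebraMap_add_pow_card_sub_one hw),
    card_image_of_injective _ (injective_algebraMap_add_pow_card_sub_one hw), card_univ]

theorem zero_notMem_projLineImage (hw : w ^ Fintype.card K ≠ w) : 0 ∉ projLineImage K w := by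
  simpa [projLineImage, eq_comm] using fun a => pow_ne_zero _ (algebraMap_add_ne_zero hw a)

theorem sum_pow_projLineImage (hw : w ^ Fintype.card K ≠ w) {j : ℕ} (hj : 1 ≤ j)
    (hjQ : j ≤ Fintype.card K) : ∑ x ∈ projLineImage K w, x ^ j = 0 := by
  rw [projLineImage, sum_insert (one_notMem_image_algebraMap_add_pow_card_sub_one hw),
    sum_image fun a _ b _ h => injective_algebraMap_add_pow_card_sub_one hw h,
    sum_algebraMap_add_pow_card_sub_one_pow hj hjQ, one_pow, add_neg_cancel]

end FiniteField

section BCH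

variable {F E : Type} [Field F] [Field E] [Algebra F E] {n δ : ℕ} {β : E}

theorem le_hammingNorm_of_mem_bchCode [DecidableEq F] (hβ : orderOf β = n) {c : Fin n → F}
    (hc : c ∈ bchCode F E n δ β) (hc0 : c ≠ 0) : δ ≤ hammingNorm c := by
  by_contra! hlt
  obtain ⟨i₀, hi₀⟩ := Function.ne_iff.mp hc0
  have hβ0 : β ≠ 0 := by
    rintro rfl
    have := pow_orderOf_eq_one (0 : E)
    rw [hβ, zero_pow (Fin.pos i₀).ne'] at this
    exact zero_ne_one this
  let s : Finset (Fin n) := {i | c i ≠ 0}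
  have hvanish := eq_zero_of_forall_sum_mul_pow_eq_zero (s := s) (x := fun i => β ^ (i : ℕ))
    (v := fun i => algebraMap F E (c i) * β ^ (i : ℕ))
    (injective_pow_of_orderOf_eq hβ).injOn fun j hj => by
      have hs : #s = hammingNorm c := rfl
      rw [← hc (j + 1) (by omega) (by omega)]
      refine sum_subset (subset_univ s) (fun i _ hi => by simp_all [s]) |>.trans ?_
      exact sum_congr rfl fun i _ => by ring
  exact hi₀ (by simpa [hβ0] using hvanish i₀ (by simpa [s] using hi₀))

theorem exists_mem_bchCode_hammingNorm_eq [DecidableEq F] [DecidableEq E] (hn : 0 < n)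
    (hβ : orderOf β = n) {S : Finset E} (hSne : S.Nonempty) (hSβ : ∀ x ∈ S, ∃ k : ℕ, x = β ^ k)
    (hS : ∀ j, 1 ≤ j → j ≤ δ - 1 → ∑ x ∈ S, x ^ j = 0) :
    ∃ c ∈ bchCode F E n δ β, c ≠ 0 ∧ hammingNorm c = #S := by
  let T : Finset (Fin n) := {i | β ^ (i : ℕ) ∈ S}
  have hinj : (T : Set (Fin n)).InjOn fun i : Fin n => β ^ (i : ℕ) :=
    (injective_pow_of_orderOf_eq hβ).injOn
  have hsurj : (T : Set (Fin n)).SurjOn (fun i : Fin n => β ^ (i : ℕ)) S := fun x hx => by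
    obtain ⟨k, rfl⟩ := hSβ x hx
    exact ⟨⟨k % n, Nat.mod_lt k hn⟩, by simpa [T, ← hβ, pow_mod_orderOf] using hx,
      by simp [← hβ, pow_mod_orderOf]⟩
  have hmaps : ∀ i ∈ T, β ^ (i : ℕ) ∈ S := fun i hi => by simpa [T] using hi
  let c : Fin n → F := fun i => if β ^ (i : ℕ) ∈ S then 1 else 0
  have hwt : hammingNorm c = #S := by
    rw [← card_nbij _ hmaps hinj hsurj]
    simp [hammingNorm, c, T]
  refine ⟨c, fun j hj1 hjδ => ?_, fun h => ?_, hwt⟩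
  · rw [← hS j hj1 hjδ, ← sum_nbij _ hmaps hinj hsurj (fun i _ => rfl), sum_filter]
    simp [c, pow_mul]
  · rw [h, hammingNorm_zero] at hwt
    exact hSne.card_pos.ne hwt

theorem hasMinDist_bchCode_card_add_one [DecidableEq F] {K : Type*} [Field K] [Fintype K]
    [Algebra K E] (hn : 0 < n) (hβ : orderOf β = n) (hgen : ∀ x : E, x ≠ 0 → ∃ k : ℕ, x = β ^ k)
    {w : E} (hw : w ^ Fintype.card K ≠ w) :
    hasMinDist (bchCode F E n (Fintype.card K + 1) β) (Fintype.card K + 1) := by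
  classical
  obtain ⟨c, hc, hc0, hwt⟩ := exists_mem_bchCode_hammingNorm_eq (F := F)
    (δ := Fintype.card K + 1) hn hβ (insert_nonempty _ _)
    (fun x hx => hgen x (ne_of_mem_of_not_mem hx (FiniteField.zero_notMem_projLineImage hw)))
    fun j hj hjQ => FiniteField.sum_pow_projLineImage hw hj (by omega)
  exact ⟨⟨c, hc, hc0, hwt.trans (FiniteField.card_projLineImage hw)⟩,
    fun c hc hc0 => le_hammingNorm_of_mem_bchCode hβ hc hc0⟩

end BCH

theorem bch_qt_plus_one_minDist_general
    (q t m : ℕ) (hq : IsPrimePow q) (ht : 0 < t) (htm : t ∣ m) (htm' : t < m)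
    (F E : Type) [Field F] [DecidableEq F] [Field E] [Fintype E] [Algebra F E]
    (hE : Fintype.card E = q ^ m)
    (β : E) (hβ : ∀ x : E, x ≠ 0 → ∃ k : ℕ, x = β ^ k) :
    hasMinDist (bchCode F E (q ^ m - 1) (q ^ t + 1) β) (q ^ t + 1) := by
  obtain ⟨p, e, hp, he, rfl⟩ := hq
  have : Fact p.Prime := ⟨hp.nat_prime⟩
  let K := GaloisField p (e * t)
  let : Fintype K := Fintype.ofFinite K
  have hK : Fintype.card K = (p ^ e) ^ t := by
    rw [Fintype.card_eq_nat_card, GaloisField.card _ _ (by positivity), pow_mul]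
  have hKE : Fintype.card K < Fintype.card E := hK ▸ hE ▸ Nat.pow_lt_pow_right
    (Nat.one_lt_pow he.ne' hp.nat_prime.one_lt) htm'
  have hQ : 1 < Fintype.card K := Fintype.one_lt_card
  obtain ⟨φ⟩ := FiniteField.nonempty_ringHom_galoisField (E := E) (p := p) (k := e * t)
    (by rw [hE, ← pow_mul]) (by positivity) (mul_dvd_mul_left e htm)
  let := φ.toAlgebra
  obtain ⟨w, hw⟩ := FiniteField.exists_pow_ne_self hQ hKE
  have hord := FiniteField.orderOf_eq_card_sub_one_of_forall_eq_pow (by omega) hβ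
  rw [← hE, ← hK]
  exact hasMinDist_bchCode_card_add_one (by omega) hord hβ hw

/-- Theorem: BCH codes with `δ = q^t + 1`. Let `t ∣ m` with
`t < m`. Then the narrow-sense primitive BCH code `C_(q, q^m - 1, q^t + 1, 1)` has
minimum distance exactly `q^t + 1`. -/
theorem bch_qt_plus_one_minDist
    (q t m : ℕ) (hq : IsPrimePow q) (ht : 0 < t) (htm : t ∣ m) (htm' : t < m)
    (F E : Type) [Field F] [Fintype F] [DecidableEq F] [Field E] [Fintype E] [Algebra F E]
    (hF : Fintype.card F = q) (hE : Fintype.card E = q ^ m)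
    (β : E) (hβ : ∀ x : E, x ≠ 0 → ∃ k : ℕ, x = β ^ k) :
    hasMinDist (bchCode F E (q ^ m - 1) (q ^ t + 1) β) (q ^ t + 1) :=
  bch_qt_plus_one_minDist_general q t m hq ht htm htm' F E hE β hβ
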